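/- arXiv:2408.16137 — 5 statements merged into one kernel-verified Lean document; each statement's English description precedes it below -/
import Mathlib

section
/- Correctness of Shamir's Secret Sharing: for any polynomial P over Z_q of degree at most k-1 with P(0) = s, and any subset K of at least k distinct nonzero evaluation points, the Lagrange combination Σ_{j∈K} λ_j P(x_j) with λ_j = Π_{i∈K,i≠j} x_i/(x_i − x_j) equals s. -/
/-- correctness of Shamir's secret sharing: the Lagrange combination at `0` of at
least `k` shares of a polynomial of degree `< k` with constant term `s` equals `s`. -/
theorem stmt2 (q k n : ℕ) [Fact q.Prime] (x : Fin n → ZMod q)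
    (hx : Function.Injective x) (hx0 : ∀ j, x j ≠ 0)
    (P : Polynomial (ZMod q)) (hdeg : P.degree < (k : WithBot ℕ))
    (s : ZMod q) (hs : P.eval 0 = s)
    (K : Finset (Fin n)) (hK : k ≤ K.card) :
    ∑ j ∈ K, (∏ i ∈ K.erase j, x i / (x i - x j)) * P.eval (x j) = s := by
  have hvs : Set.InjOn x K := hx.injOn
  have hdeg' : P.degree < (K.card : WithBot ℕ) :=
    lt_of_lt_of_le hdeg (by exact_mod_cast Nat.cast_le.mpr hK)
  have h := Lagrange.eq_interpolate hvs hdeg'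
  have := congrArg (Polynomial.eval (0 : ZMod q)) h
  rw [Lagrange.interpolate_apply] at this
  simp only [Polynomial.eval_finset_sum, Polynomial.eval_mul, Polynomial.eval_C,
    Lagrange.basis, Polynomial.eval_prod, Lagrange.basisDivisor, Polynomial.eval_mul,
    Polynomial.eval_C, Polynomial.eval_sub, Polynomial.eval_X, Function.comp] at this
  rw [hs] at this
  rw [this]
  apply Finset.sum_congr rfl
  intro j hj
  rw [mul_comm]
  congr 1
  apply Finset.prod_congr rfl
  intro i hi
  have hij : x i ≠ x j := by
    intro h'
    exact (Finset.mem_erase.mp hi).1 (hx h')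
  have h1 : x i - x j ≠ 0 := sub_ne_zero.mpr hij
  have h2 : x j - x i ≠ 0 := sub_ne_zero.mpr hij.symm
  field_simp
  ring
end

section
/- Perfect privacy of Shamir's scheme: for any subset T of at most k-1 evaluation points and any two secrets s, s' in Z_q, the distribution of the share vector {P(x_j)}_{j∈T}, where P is uniform among degree-at-most-(k-1) polynomials with constant term s, is identical to the corresponding distribution with constant term s'. -/
/-!
Translating the uniformly random coefficient vector `a` by a fixed vector `c` preserves its
distribution. Since `T` has at most `k - 1` points, all nonzero, Lagrange interpolation of
`(s' - s) / x_j` yields `c` with `∑ i, c i * x_j ^ (i + 1) = s' - s` for every `j ∈ T`, and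
this translation turns the shares of `s` into the shares of `s'`.
-/

open Polynomial

theorem PMF.map_equiv_uniformOfFintype {α β : Type*} [Fintype α] [Nonempty α] [Fintype β]
    [Nonempty β] (e : α ≃ β) :
    (PMF.uniformOfFintype α).map e = PMF.uniformOfFintype β := by
  classical
  ext b
  rw [PMF.map_apply, tsum_eq_single (e.symm b) fun a ha => if_neg fun h => ha (by simp [h])]
  simp [Fintype.card_congr e]

theorem PMF.map_uniformOfFintype_eq_of_add_right {G β : Type*} [AddGroup G] [Fintype G]
    [Nonempty G] {f g : G → β} (c : G) (hfg : ∀ a, f (a + c) = g a) :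
    (PMF.uniformOfFintype G).map f = (PMF.uniformOfFintype G).map g := by
  calc (PMF.uniformOfFintype G).map f
      = ((PMF.uniformOfFintype G).map (Equiv.addRight c)).map f := by
        rw [PMF.map_equiv_uniformOfFintype]
    _ = (PMF.uniformOfFintype G).map g := by
        rw [PMF.map_comp]
        exact congrArg (PMF.map · _) (funext hfg)

theorem exists_sum_mul_pow_succ_eq {F : Type*} [Field F] [DecidableEq F] {m : ℕ} (S : Finset F)
    (hS0 : 0 ∉ S) (hSm : S.card ≤ m) (v : F → F) :
    ∃ c : Fin m → F, ∀ y ∈ S, ∑ i, c i * y ^ ((i : ℕ) + 1) = v y := by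
  set Q := Lagrange.interpolate S id fun y => v y / y
  have hinj : Set.InjOn id (S : Set F) := Function.injective_id.injOn
  have hQ : Q.degree < m :=
    (Lagrange.degree_interpolate_lt _ hinj).trans_le (by exact_mod_cast hSm)
  refine ⟨fun i => Q.coeff i, fun y hy => ?_⟩
  have hy0 : y ≠ 0 := ne_of_mem_of_not_mem hy hS0
  calc ∑ i : Fin m, Q.coeff i * y ^ ((i : ℕ) + 1)
      = (∑ i : Fin m, Q.coeff i * y ^ (i : ℕ)) * y := by
        simp only [pow_succ, Finset.sum_mul, mul_assoc]
    _ = Q.eval y * y := by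
        rw [Polynomial.sum_fin (fun e a => a * y ^ e) (fun _ => zero_mul _) hQ, eval_eq_sum]
    _ = v y := by
        rw [show Q.eval y = v y / y from Lagrange.eval_interpolate_at_node _ hinj hy]
        exact div_mul_cancel₀ _ hy0

theorem stmt4_general (q k n : ℕ) [Fact q.Prime] (x : Fin n → ZMod q)
    (hx0 : ∀ j, x j ≠ 0)
    (T : Finset (Fin n)) (hT : T.card ≤ k - 1) (s s' : ZMod q) :
    PMF.map (fun a : Fin (k - 1) → ZMod q => fun j : T =>
        (Polynomial.C s +
          ∑ i, Polynomial.C (a i) * Polynomial.X ^ ((i : ℕ) + 1)).eval (x j))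
      (PMF.uniformOfFintype (Fin (k - 1) → ZMod q)) =
    PMF.map (fun a : Fin (k - 1) → ZMod q => fun j : T =>
        (Polynomial.C s' +
          ∑ i, Polynomial.C (a i) * Polynomial.X ^ ((i : ℕ) + 1)).eval (x j))
      (PMF.uniformOfFintype (Fin (k - 1) → ZMod q)) := by
  classical
  have h0 : (0 : ZMod q) ∉ T.image x := fun h =>
    let ⟨j, _, hj⟩ := Finset.mem_image.1 h
    hx0 j hj
  obtain ⟨c, hc⟩ := exists_sum_mul_pow_succ_eq (T.image x) h0
    (Finset.card_image_le.trans hT) fun _ => s' - s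
  refine PMF.map_uniformOfFintype_eq_of_add_right c fun a => funext fun j => ?_
  simp only [eval_add, eval_C, eval_finsetSum, eval_mul, eval_pow, eval_X, Pi.add_apply,
    add_mul, Finset.sum_add_distrib]
  rw [hc _ (Finset.mem_image_of_mem x j.2)]
  ring

/-- perfect privacy of Shamir's scheme: for any set `T` of at most `k-1`
evaluation points, the distribution of the shares at points of `T` is the same for any two
secrets `s`, `s'`. -/
theorem stmt4 (q k n : ℕ) [Fact q.Prime] (x : Fin n → ZMod q)
    (hx : Function.Injective x) (hx0 : ∀ j, x j ≠ 0)
    (T : Finset (Fin n)) (hT : T.card ≤ k - 1) (s s' : ZMod q) :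
    PMF.map (fun a : Fin (k - 1) → ZMod q => fun j : T =>
        (Polynomial.C s +
          ∑ i, Polynomial.C (a i) * Polynomial.X ^ ((i : ℕ) + 1)).eval (x j))
      (PMF.uniformOfFintype (Fin (k - 1) → ZMod q)) =
    PMF.map (fun a : Fin (k - 1) → ZMod q => fun j : T =>
        (Polynomial.C s' +
          ∑ i, Polynomial.C (a i) * Polynomial.X ^ ((i : ℕ) + 1)).eval (x j))
      (PMF.uniformOfFintype (Fin (k - 1) → ZMod q)) :=
  stmt4_general q k n x hx0 T hT s s'
end

section
/- Consistency of the summed-key DPRF: if each party j holds sk_j = Σ_{i=1}^n P_i(x_j) where each P_i has degree at most k-1, then for any two subsets K, K' of at least k indices, Π_{j∈K} (ω^{sk_j})^{λ_j^K} = Π_{j∈K'} (ω^{sk_j})^{λ_j^{K'}}, and both equal ω^{Σ_i P_i(0)}. -/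
open Polynomial Finset

lemma lag0 {q : ℕ} [Fact q.Prime] {n : ℕ} (x : Fin n → ZMod q) (hx : Function.Injective x)
    (Q : Polynomial (ZMod q)) (K : Finset (Fin n)) (hd : Q.degree < (K.card : WithBot ℕ)) :
    Q.eval 0 = ∑ j ∈ K, Q.eval (x j) * ∏ i ∈ K.erase j, x i / (x i - x j) := by
  have h := Lagrange.eq_interpolate (v := x) (s := K) (hx.injOn) hd
  conv_lhs => rw [h]
  rw [Lagrange.interpolate_apply, eval_finset_sum]
  refine Finset.sum_congr rfl fun j hj => ?_
  rw [eval_mul, eval_C, Lagrange.basis, eval_prod]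
  congr 1
  refine Finset.prod_congr rfl fun i hi => ?_
  rw [Lagrange.basisDivisor, eval_mul, eval_C, eval_sub, eval_X, eval_C]
  have h2 : (x j - x i)⁻¹ = -(x i - x j)⁻¹ := by rw [← inv_neg, neg_sub]
  rw [zero_sub, h2, div_eq_mul_inv]; ring

lemma pow_mod_q {q : ℕ} {G : Type*} [CommGroup G] [Fintype G] (hG : Fintype.card G = q)
    (ω : G) (m : ℕ) : ω ^ m = ω ^ (m % q) := by
  conv_lhs => rw [← Nat.div_add_mod m q]
  rw [pow_add, pow_mul, ← hG, pow_card_eq_one, one_pow, one_mul]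

lemma pow_val_mul {q : ℕ} [Fact q.Prime] {G : Type*} [CommGroup G] [Fintype G]
    (hG : Fintype.card G = q) (ω : G) (a b : ZMod q) :
    (ω ^ a.val) ^ b.val = ω ^ (a * b).val := by
  rw [← pow_mul, ZMod.val_mul, ← pow_mod_q hG]

lemma prod_pow_val {q : ℕ} [Fact q.Prime] {G : Type*} [CommGroup G] [Fintype G]
    (hG : Fintype.card G = q) (ω : G) {ι : Type*} (K : Finset ι) (f : ι → ZMod q) :
    ∏ j ∈ K, ω ^ (f j).val = ω ^ (∑ j ∈ K, f j).val := by
  classical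
  induction K using Finset.cons_induction with
  | empty => simp [ZMod.val_zero]
  | cons a s ha ih =>
    rw [Finset.prod_cons, Finset.sum_cons, ih, ← pow_add, ZMod.val_add, ← pow_mod_q hG]

/-- consistency of the summed-key DPRF: combining partial evaluations over any
subset of at least `k` parties gives `ω ^ (∑ i, P i |>.eval 0)`. -/
theorem stmt7 (q k n : ℕ) [Fact q.Prime] (G : Type*) [CommGroup G] [Fintype G]
    (hG : Fintype.card G = q) (ω : G) (x : Fin n → ZMod q)
    (hx : Function.Injective x) (hx0 : ∀ j, x j ≠ 0)
    (P : Fin n → Polynomial (ZMod q)) (hdeg : ∀ i, (P i).degree < (k : WithBot ℕ))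
    (sk : Fin n → ZMod q) (hsk : ∀ j, sk j = ∑ i, (P i).eval (x j))
    (K K' : Finset (Fin n)) (hK : k ≤ K.card) (hK' : k ≤ K'.card) :
    (∏ j ∈ K, (ω ^ (sk j).val) ^ (∏ i ∈ K.erase j, x i / (x i - x j)).val
        = ω ^ (∑ i, (P i).eval 0).val) ∧
    (∏ j ∈ K', (ω ^ (sk j).val) ^ (∏ i ∈ K'.erase j, x i / (x i - x j)).val
        = ω ^ (∑ i, (P i).eval 0).val) := by
  set Q : Polynomial (ZMod q) := ∑ i, P i with hQ
  have hQdeg : Q.degree < (k : WithBot ℕ) :=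
    lt_of_le_of_lt (Polynomial.degree_sum_le _ _) (by
      rcases Finset.eq_empty_or_nonempty (Finset.univ : Finset (Fin n)) with h | h
      · simp [h]
      · rw [Finset.sup_lt_iff (by exact_mod_cast WithBot.bot_lt_coe k)]
        exact fun i _ => hdeg i)
  have hQeval : ∀ y : ZMod q, Q.eval y = ∑ i, (P i).eval y := by
    intro y; simp [hQ, Polynomial.eval_finset_sum]
  have main : ∀ S : Finset (Fin n), k ≤ S.card →
      ∏ j ∈ S, (ω ^ (sk j).val) ^ (∏ i ∈ S.erase j, x i / (x i - x j)).val
        = ω ^ (∑ i, (P i).eval 0).val := by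
    intro S hS
    have hd : Q.degree < (S.card : WithBot ℕ) :=
      lt_of_lt_of_le hQdeg (by exact_mod_cast hS)
    have hL := lag0 x hx Q S hd
    calc ∏ j ∈ S, (ω ^ (sk j).val) ^ (∏ i ∈ S.erase j, x i / (x i - x j)).val
        = ∏ j ∈ S, ω ^ (sk j * ∏ i ∈ S.erase j, x i / (x i - x j)).val := by
          exact Finset.prod_congr rfl fun j _ => pow_val_mul hG ω _ _
      _ = ω ^ (∑ j ∈ S, sk j * ∏ i ∈ S.erase j, x i / (x i - x j)).val :=
          prod_pow_val hG ω S _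
      _ = ω ^ (∑ i, (P i).eval 0).val := by
          rw [← hQeval]
          congr 1
          rw [hL]
          exact congrArg _ (Finset.sum_congr rfl fun j _ => by rw [hsk, ← hQeval])
  exact ⟨main K hK, main K' hK'⟩
end

section
/- Detection of low-degree cheating: if Lagrange reconstruction at 0 from every subset of exactly k−1 of the n shares of a polynomial P of degree at most k−1 agrees with the reconstruction from all n shares, then P has degree at most k−2. -/
/-!
Take any `k - 1` shares. Their interpolant `Q` agrees with `P` at those `k - 1` nodes and, by
hypothesis, also at `0`, which is not a node. So `P - Q` has degree `< k` and `k` roots, hence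
`P = Q`, and `Q` has degree `< k - 1`.
-/

open Polynomial Finset

namespace Lagrange

variable {F ι : Type*} [Field F] [DecidableEq F] [DecidableEq ι] {s : Finset ι} {v : ι → F}

theorem eq_interpolate_of_eval_eq_off_nodes (hvs : Set.InjOn v s) {P : F[X]}
    (hdeg : P.degree < (#s + 1 : ℕ)) {z : F} (hz : z ∉ s.image v)
    (hPz : (interpolate s v fun i => P.eval (v i)).eval z = P.eval z) :
    P = interpolate s v fun i => P.eval (v i) := by
  set Q := interpolate s v fun i => P.eval (v i)
  have hQ : Q.degree < (#s + 1 : ℕ) :=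
    (degree_interpolate_lt _ hvs).trans (by exact_mod_cast Nat.lt_succ_self _)
  refine eq_of_degree_sub_lt_of_eval_finset_eq (insert z (s.image v)) ?_ ?_
  · rw [card_insert_of_notMem hz, card_image_of_injOn hvs]
    exact (degree_sub_le _ _).trans_lt (max_lt hdeg hQ)
  · intro y hy
    rcases mem_insert.mp hy with rfl | hy
    · exact hPz.symm
    · obtain ⟨i, hi, rfl⟩ := mem_image.mp hy
      exact (eval_interpolate_at_node (fun i => P.eval (v i)) hvs hi).symm

end Lagrange

theorem stmt9_general (q k n : ℕ) [Fact q.Prime] (hn : k ≤ n)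
    (x : Fin n → ZMod q) (hx : Function.Injective x) (hx0 : ∀ j, x j ≠ 0)
    (P : Polynomial (ZMod q)) (hdeg : P.degree < (k : WithBot ℕ))
    (h : ∀ T : Finset (Fin n), T.card = k - 1 →
      (Lagrange.interpolate T x (fun j => P.eval (x j))).eval 0 = P.eval 0) :
    P.degree < ((k - 1 : ℕ) : WithBot ℕ) := by
  obtain ⟨T, -, hT⟩ := exists_subset_card_eq (s := (univ : Finset (Fin n))) (n := k - 1)
    (by simp; omega)
  have hinj : Set.InjOn x T := hx.injOn
  have hP : P = Lagrange.interpolate T x fun j => P.eval (x j) := by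
    refine Lagrange.eq_interpolate_of_eval_eq_off_nodes hinj
      (hdeg.trans_le (by rw [hT]; exact_mod_cast (by omega : k ≤ k - 1 + 1))) ?_ (h T hT)
    simpa [mem_image] using fun j _ => hx0 j
  rw [hP, ← hT]
  exact Lagrange.degree_interpolate_lt _ hinj

/-- detection of low-degree cheating: if Lagrange reconstruction at `0` from every
subset of exactly `k-1` of the `n` shares of `P` (of degree `< k`) agrees with `P.eval 0`, then
`P` has degree `< k - 1` (i.e. at most `k - 2`). -/
theorem stmt9 (q k n : ℕ) [Fact q.Prime] (hk : 1 ≤ k) (hn : k ≤ n)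
    (x : Fin n → ZMod q) (hx : Function.Injective x) (hx0 : ∀ j, x j ≠ 0)
    (P : Polynomial (ZMod q)) (hdeg : P.degree < (k : WithBot ℕ))
    (h : ∀ T : Finset (Fin n), T.card = k - 1 →
      (Lagrange.interpolate T x (fun j => P.eval (x j))).eval 0 = P.eval 0) :
    P.degree < ((k - 1 : ℕ) : WithBot ℕ) :=
  stmt9_general q k n hn x hx hx0 P hdeg h
end

section
/- Key update preserves the DPRF: if parties add shares of a degree-at-most-(k−1) polynomial Q with Q(0) = 0 to their existing shares of P (degree at most k−1), then for any subset K of at least k indices, the combined DPRF output Π_{j∈K} (ω^{P(x_j)+Q(x_j)})^{λ_j} equals Π_{j∈K} (ω^{P(x_j)})^{λ_j} = ω^{P(0)}. -/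
open Polynomial Finset

private lemma lag_sum {q k n : ℕ} [Fact q.Prime] (x : Fin n → ZMod q)
    (hx : Function.Injective x) (R : Polynomial (ZMod q)) (hR : R.degree < (k : WithBot ℕ))
    (K : Finset (Fin n)) (hK : k ≤ K.card) :
    ∑ j ∈ K, R.eval (x j) * (∏ i ∈ K.erase j, x i / (x i - x j)) = R.eval 0 := by
  have hinj : Set.InjOn x K := hx.injOn
  have hdeg : R.degree < (K.card : WithBot ℕ) :=
    lt_of_lt_of_le hR (by exact_mod_cast hK)
  have hrep := Lagrange.eq_interpolate hinj hdeg
  conv_rhs => rw [hrep]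
  rw [Lagrange.interpolate_apply, eval_finset_sum]
  refine Finset.sum_congr rfl fun j hj => ?_
  rw [eval_mul, eval_C]
  congr 1
  rw [Lagrange.basis, eval_prod]
  refine Finset.prod_congr rfl fun i hi => ?_
  rw [Lagrange.basisDivisor, eval_mul, eval_C, eval_sub, eval_X, eval_C]
  rw [mul_comm, ← div_eq_mul_inv, zero_sub, neg_div, ← div_neg, neg_sub]

private lemma dprf_eq {q k n : ℕ} [Fact q.Prime] {G : Type*} [CommGroup G] [Fintype G]
    (hG : Fintype.card G = q) (ω : G) (x : Fin n → ZMod q)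
    (hx : Function.Injective x) (R : Polynomial (ZMod q)) (hR : R.degree < (k : WithBot ℕ))
    (K : Finset (Fin n)) (hK : k ≤ K.card) :
    ∏ j ∈ K, (ω ^ (R.eval (x j)).val) ^ (∏ i ∈ K.erase j, x i / (x i - x j)).val =
      ω ^ (R.eval 0).val := by
  have hq : ω ^ q = 1 := by rw [← hG]; exact pow_card_eq_one
  have hNZ : NeZero q := ⟨(Fact.out : q.Prime).ne_zero⟩
  have hmod : ∀ m : ℕ, ω ^ (m % q) = ω ^ m := fun m => (pow_eq_pow_mod m hq).symm
  have e_mul : ∀ a b : ZMod q, (ω ^ a.val) ^ b.val = ω ^ (a * b).val := by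
    intro a b
    rw [← pow_mul, ZMod.val_mul, hmod]
  have e_sum : ∀ (s : Finset (Fin n)) (f : Fin n → ZMod q),
      ∏ j ∈ s, ω ^ (f j).val = ω ^ (∑ j ∈ s, f j).val := by
    intro s f
    induction s using Finset.cons_induction with
    | empty => simp
    | cons a s ha ih =>
        rw [Finset.prod_cons, Finset.sum_cons, ih, ← pow_add, ZMod.val_add, hmod]
  calc ∏ j ∈ K, (ω ^ (R.eval (x j)).val) ^ (∏ i ∈ K.erase j, x i / (x i - x j)).val
      = ∏ j ∈ K, ω ^ ((R.eval (x j)) * ∏ i ∈ K.erase j, x i / (x i - x j)).val := by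
        exact Finset.prod_congr rfl fun j _ => e_mul _ _
    _ = ω ^ (∑ j ∈ K, (R.eval (x j)) * ∏ i ∈ K.erase j, x i / (x i - x j)).val :=
        e_sum K _
    _ = ω ^ (R.eval 0).val := by rw [lag_sum x hx R hR K hK]

/-- key update preserves the DPRF: adding shares of a polynomial `Q` of degree
`< k` with `Q.eval 0 = 0` does not change the combined DPRF output, which equals
`ω ^ P.eval 0`. -/
theorem stmt18 (q k n : ℕ) [Fact q.Prime] (G : Type*) [CommGroup G] [Fintype G]
    (hG : Fintype.card G = q) (ω : G) (x : Fin n → ZMod q)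
    (hx : Function.Injective x) (hx0 : ∀ j, x j ≠ 0)
    (P Q : Polynomial (ZMod q)) (hP : P.degree < (k : WithBot ℕ))
    (hQ : Q.degree < (k : WithBot ℕ)) (hQ0 : Q.eval 0 = 0)
    (K : Finset (Fin n)) (hK : k ≤ K.card) :
    (∏ j ∈ K, (ω ^ (P.eval (x j) + Q.eval (x j)).val) ^
          (∏ i ∈ K.erase j, x i / (x i - x j)).val =
        ∏ j ∈ K, (ω ^ (P.eval (x j)).val) ^ (∏ i ∈ K.erase j, x i / (x i - x j)).val) ∧
    (∏ j ∈ K, (ω ^ (P.eval (x j)).val) ^ (∏ i ∈ K.erase j, x i / (x i - x j)).val =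
        ω ^ (P.eval 0).val) := by
  have hPQ : (P + Q).degree < (k : WithBot ℕ) :=
    lt_of_le_of_lt (Polynomial.degree_add_le P Q) (max_lt hP hQ)
  have h1 := dprf_eq hG ω x hx (P + Q) hPQ K hK
  have h2 := dprf_eq hG ω x hx P hP K hK
  simp only [Polynomial.eval_add, hQ0, add_zero] at h1
  exact ⟨h1.trans h2.symm, h2⟩
end
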